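/- arXiv:1312.7804 — 3 statements merged into one kernel-verified Lean document; each statement's English description precedes it below -/
import Mathlib

section
/- For a self-adjoint operator H₀ and a bounded self-adjoint operator W on a Hilbert space, one has the operator inequality (1 + (H₀+W)²)⁻¹ ≤ (1 + ‖W‖ + ‖W‖²)·(1 + H₀²)⁻¹. -/
/-!
Writing `K = H₀ + W` and `ε = ‖W‖`, for every `x` one has `‖H₀ x‖ ≤ ‖K x‖ + ε ‖x‖`, so by
`2ab ≤ a² + b²`
`‖x‖² + ‖H₀ x‖² ≤ (1 + ε + ε²) ‖x‖² + (1 + ε) ‖K x‖² ≤ (1 + ε + ε²) (‖x‖² + ‖K x‖²)`,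
that is `1 + H₀² ≤ (1 + ε + ε²) (1 + K²)`. Inversion is operator antitone on positive invertible
elements of a C⋆-algebra, which turns this into the claim.
-/

open ContinuousLinearMap

lemma CStarAlgebra.inv_le_smul_inv_of_le_smul {A : Type*} [CStarAlgebra A] [PartialOrder A]
    [StarOrderedRing A] {a b : Aˣ} {c : ℝ} (ha : 0 ≤ (a : A)) (hc : 0 < c)
    (hab : (a : A) ≤ c • (b : A)) : (↑b⁻¹ : A) ≤ c • (↑a⁻¹ : A) := by
  have h := CStarAlgebra.inv_le_inv ha (b := Units.mk0 c hc.ne' • b) hab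
  rw [Units.smul_inv, Units.val_smul, Units.smul_def, Units.val_inv_eq_inv_val,
    Units.val_mk0] at h
  exact (inv_smul_le_iff_of_pos hc).mp h

section

variable {ℋ : Type*} [NormedAddCommGroup ℋ] [InnerProductSpace ℂ ℋ] [CompleteSpace ℋ]

lemma IsSelfAdjoint.re_inner_one_add_sq_apply_self {T : ℋ →L[ℂ] ℋ} (hT : IsSelfAdjoint T)
    (x : ℋ) : RCLike.re (inner ℂ ((1 + T ^ 2 : ℋ →L[ℂ] ℋ) x) x) = ‖x‖ ^ 2 + ‖T x‖ ^ 2 := by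
  have hTT : inner ℂ (T (T x)) x = inner ℂ (T x) (T x) := hT.isSymmetric (T x) x
  simp only [add_apply, one_apply_eq_self, sq, mul_apply_eq_comp, inner_add_left, hTT, map_add,
    inner_self_eq_norm_sq]

lemma one_add_sq_le_smul_one_add_add_sq {H W : ℋ →L[ℂ] ℋ} (hH : IsSelfAdjoint H)
    (hW : IsSelfAdjoint W) :
    1 + H ^ 2 ≤ ((1 : ℝ) + ‖W‖ + ‖W‖ ^ 2) • (1 + (H + W) ^ 2) := by
  set K := H + W
  have hK : IsSelfAdjoint K := hH.add hW
  have hsa : IsSelfAdjoint (((1 : ℝ) + ‖W‖ + ‖W‖ ^ 2) • (1 + K ^ 2) - (1 + H ^ 2)) :=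
    (IsSelfAdjoint.all _ |>.smul ((IsSelfAdjoint.one _).add (hK.pow 2))).sub
      ((IsSelfAdjoint.one _).add (hH.pow 2))
  refine (le_def _ _).mpr (isPositive_def'.mpr ⟨hsa, fun x => ?_⟩)
  have hHx : ‖H x‖ ^ 2 ≤ (‖K x‖ + ‖W‖ * ‖x‖) ^ 2 := by
    gcongr
    calc ‖H x‖ = ‖K x - W x‖ := by simp [K]
      _ ≤ ‖K x‖ + ‖W x‖ := norm_sub_le _ _
      _ ≤ ‖K x‖ + ‖W‖ * ‖x‖ := by gcongr; exact W.le_opNorm x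
  simp only [reApplyInnerSelf_apply, sub_apply, smul_apply, inner_sub_left, map_sub,
    RCLike.real_smul_eq_coe_smul (K := ℂ), inner_smul_real_left, smul_eq_mul,
    RCLike.re_ofReal_mul, hK.re_inner_one_add_sq_apply_self, hH.re_inner_one_add_sq_apply_self]
  nlinarith [mul_nonneg (norm_nonneg W) (sq_nonneg (‖K x‖ - ‖x‖)), sq_nonneg (‖W‖ * ‖K x‖)]

end

/-- For a (bounded) self-adjoint operator `H₀` and a bounded self-adjoint operator `W` on a
Hilbert space, with `A = (1 + (H₀+W)²)⁻¹` and `B = (1 + H₀²)⁻¹` (characterized as two-sided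
inverses), one has the operator inequality
`(1 + (H₀+W)²)⁻¹ ≤ (1 + ‖W‖ + ‖W‖²)·(1 + H₀²)⁻¹` in the Loewner order. -/
theorem resolvent_sq_le_of_add_bounded
    {ℋ : Type*} [NormedAddCommGroup ℋ] [InnerProductSpace ℂ ℋ] [CompleteSpace ℋ]
    (H₀ W A B : ℋ →L[ℂ] ℋ) (hH₀ : IsSelfAdjoint H₀) (hW : IsSelfAdjoint W)
    (hA₁ : (1 + (H₀ + W) ^ 2) * A = 1) (hA₂ : A * (1 + (H₀ + W) ^ 2) = 1)
    (hB₁ : (1 + H₀ ^ 2) * B = 1) (hB₂ : B * (1 + H₀ ^ 2) = 1) :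
    (((1 : ℝ) + ‖W‖ + ‖W‖ ^ 2) • B - A).IsPositive := by
  let unitH₀ : (ℋ →L[ℂ] ℋ)ˣ := ⟨1 + H₀ ^ 2, B, hB₁, hB₂⟩
  let unitK : (ℋ →L[ℂ] ℋ)ˣ := ⟨1 + (H₀ + W) ^ 2, A, hA₁, hA₂⟩
  have hpos : (0 : ℋ →L[ℂ] ℋ) ≤ 1 + H₀ ^ 2 := add_nonneg zero_le_one hH₀.sq_nonneg
  exact CStarAlgebra.inv_le_smul_inv_of_le_smul (a := unitH₀) (b := unitK) hpos
    (by positivity) (one_add_sq_le_smul_one_add_add_sq hH₀ hW)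
end

section
/- Let H₀ be a self-adjoint n×n matrix with eigenvalues μ₁,…,μ_n (counting multiplicity) and orthonormal eigenbasis ψ₁,…,ψ_n, let V be a self-adjoint n×n matrix, and let f : ℝ → ℝ be continuously differentiable. Then the first-order trace formula holds: (d/dt)|_{t=0} Tr f(H₀ + tV) = Σ_{i=1}^{n} f'(μ_i)·⟨Vψ_i, ψ_i⟩. -/
open scoped Classical in
/-- The matrix function `f(A)` of a Hermitian matrix `A`, defined by the spectral theorem
(functional calculus); junk value `0` if `A` is not Hermitian. -/
noncomputable def matFun {n : Type*} [Fintype n] [DecidableEq n]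
    (f : ℝ → ℝ) (A : Matrix n n ℂ) : Matrix n n ℂ :=
  if hA : A.IsHermitian then
    (Matrix.IsHermitian.eigenvectorUnitary hA : Matrix n n ℂ) *
      Matrix.diagonal (fun i => (f (hA.eigenvalues i) : ℂ)) *
      star (Matrix.IsHermitian.eigenvectorUnitary hA : Matrix n n ℂ)
  else 0

/-!
Write `H_t = H₀ + tV`, with eigenpairs `(μ_j, ψ_j)` of `H₀` and `(λ_i, φ_i)` of `H_t`. The weights
`c_ij = |⟪φ_i, ψ_j⟫|²` form a doubly stochastic matrix, so
`Tr f(H_t) - Tr f(H₀) = ∑_j ∑_i c_ij (f(λ_i) - f(μ_j))`. For fixed `j` the probability vector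
`c_·j` has mean `μ_j + t re⟪Vψ_j, ψ_j⟫` and second moment `t² ‖Vψ_j‖²` about `μ_j`. Since `f` is
`C¹`, on a compact interval `|f y - f x - f' x (y - x)| ≤ ε |y - x| + C (y - x)²`, and averaging
this against `c_·j` (with Cauchy–Schwarz for the first moment) bounds the error by
`ε |t| ∑_j ‖Vψ_j‖ + C t² ∑_j ‖Vψ_j‖²`. No regularity of the eigenvalues in `t` is needed.
-/

open Filter Topology RCLike
open scoped InnerProductSpace

theorem abs_sub_sub_mul_le_of_abs_deriv_sub_le {f : ℝ → ℝ} {x y m M : ℝ}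
    (hf : ∀ z ∈ Set.uIcc x y, DifferentiableAt ℝ f z)
    (hM : ∀ z ∈ Set.uIcc x y, |deriv f z - m| ≤ M) :
    |f y - f x - m * (y - x)| ≤ M * |y - x| := by
  have hg : ∀ z ∈ Set.uIcc x y,
      HasDerivWithinAt (fun z => f z - m * z) (deriv f z - m) (Set.uIcc x y) z := fun z hz =>
    ((hf z hz).hasDerivAt.sub
      ((hasDerivAt_id z).const_mul m |>.congr_deriv (mul_one m))).hasDerivWithinAt
  have := (convex_uIcc x y).norm_image_sub_le_of_norm_hasDerivWithin_le hg hM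
    Set.left_mem_uIcc Set.right_mem_uIcc
  rw [Real.norm_eq_abs, Real.norm_eq_abs] at this
  convert this using 2
  ring

theorem ContDiff.exists_abs_sub_sub_deriv_mul_le {f : ℝ → ℝ} (hf : ContDiff ℝ 1 f) (a b : ℝ)
    {ε : ℝ} (hε : 0 < ε) :
    ∃ C, ∀ x ∈ Set.Icc a b, ∀ y ∈ Set.Icc a b,
      |f y - f x - deriv f x * (y - x)| ≤ ε * |y - x| + C * (y - x) ^ 2 := by
  have hdiff : Differentiable ℝ f := hf.differentiable one_ne_zero
  have hcont : ContinuousOn (deriv f) (Set.Icc a b) := (hf.continuous_deriv le_rfl).continuousOn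
  obtain ⟨M, hM⟩ := isCompact_Icc.exists_bound_of_continuousOn hcont
  obtain ⟨δ, hδ, hunif⟩ := Metric.uniformContinuousOn_iff.mp
    (isCompact_Icc.uniformContinuousOn_of_continuous hcont) ε hε
  refine ⟨2 * M / δ, fun x hx y hy => ?_⟩
  have hsub : Set.uIcc x y ⊆ Set.Icc a b := Set.uIcc_subset_Icc hx hy
  have hM₀ : 0 ≤ M := (norm_nonneg _).trans (hM x hx)
  -- Near the diagonal uniform continuity of `deriv f` gives the `ε`-term; away from it the
  -- Lipschitz bound `2M |y - x|` is absorbed into the quadratic term.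
  rcases lt_or_ge |y - x| δ with hclose | hfar
  · have hR := abs_sub_sub_mul_le_of_abs_deriv_sub_le (m := deriv f x) (M := ε)
      (fun z _ => hdiff z) fun z hz => by
        refine (hunif z (hsub hz) x hx ?_).le
        rw [Real.dist_eq]
        exact (Set.abs_sub_left_of_mem_uIcc hz).trans_lt hclose
    nlinarith [sq_nonneg (y - x), div_nonneg (mul_nonneg zero_le_two hM₀) hδ.le]
  · have hR := abs_sub_sub_mul_le_of_abs_deriv_sub_le (m := deriv f x) (M := 2 * M)
      (fun z _ => hdiff z) fun z hz => by
        have hbz := hM z (hsub hz)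
        have hbx := hM x hx
        rw [Real.norm_eq_abs] at hbz hbx
        linarith [abs_sub (deriv f z) (deriv f x)]
    have hquad : 2 * M * |y - x| ≤ 2 * M / δ * (y - x) ^ 2 := by
      rw [← sq_abs, div_mul_eq_mul_div, le_div_iff₀ hδ]
      nlinarith [mul_le_mul_of_nonneg_left hfar (by positivity : 0 ≤ 2 * M * |y - x|)]
    linarith [mul_nonneg hε.le (abs_nonneg (y - x))]

theorem hasDerivAt_of_forall_abs_sub_sub_le {g : ℝ → ℝ} {x D : ℝ}
    (h : ∀ ε > 0, ∃ C, ∀ᶠ t in 𝓝 x, |g t - g x - (t - x) * D| ≤ ε * |t - x| + C * (t - x) ^ 2) :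
    HasDerivAt g D x := by
  rw [hasDerivAt_iff_isLittleO, Asymptotics.isLittleO_iff]
  intro c hc
  obtain ⟨C, hC⟩ := h (c / 2) (half_pos hc)
  have hnear : ∀ᶠ t in 𝓝 x, |t - x| ≤ c / 2 / (|C| + 1) := by
    filter_upwards [Metric.closedBall_mem_nhds x (by positivity : 0 < c / 2 / (|C| + 1))] with t ht
    rwa [Metric.mem_closedBall, Real.dist_eq] at ht
  filter_upwards [hC, hnear] with t ht hnear
  rw [le_div_iff₀ (by positivity)] at hnear
  have hquad : C * (t - x) ^ 2 ≤ c / 2 * |t - x| := by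
    rw [← sq_abs]
    nlinarith [le_abs_self C, abs_nonneg (t - x), abs_nonneg C]
  rw [smul_eq_mul, Real.norm_eq_abs, Real.norm_eq_abs]
  linarith

theorem abs_sum_mul_sub_sub_deriv_le {ι : Type*} [Fintype ι] {f f' : ℝ → ℝ} {w x : ι → ℝ}
    {x₀ ε C a : ℝ} (hw : ∀ i, 0 ≤ w i) (hw₁ : ∑ i, w i = 1) (hε : 0 ≤ ε)
    (hR : ∀ i, |f (x i) - f x₀ - f' x₀ * (x i - x₀)| ≤ ε * |x i - x₀| + C * (x i - x₀) ^ 2)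
    (ha : 0 ≤ a) (hvar : ∑ i, w i * (x i - x₀) ^ 2 = a ^ 2) :
    |∑ i, w i * f (x i) - f x₀ - f' x₀ * ∑ i, w i * (x i - x₀)| ≤ ε * a + C * a ^ 2 := by
  have hmean : ∑ i, w i * |x i - x₀| ≤ a := by
    have h₀ : 0 ≤ ∑ i, w i * |x i - x₀| :=
      Finset.sum_nonneg fun i _ => mul_nonneg (hw i) (abs_nonneg _)
    refine (pow_le_pow_iff_left₀ h₀ ha two_ne_zero).1 ?_
    calc (∑ i, w i * |x i - x₀|) ^ 2 ≤ (∑ i, w i) * ∑ i, w i * (x i - x₀) ^ 2 :=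
          Finset.sum_sq_le_sum_mul_sum_of_sq_le_mul _ (fun i _ => hw i)
            (fun i _ => mul_nonneg (hw i) (sq_nonneg _))
            (fun i _ => by rw [mul_pow, sq_abs]; nlinarith [hw i])
      _ = a ^ 2 := by rw [hw₁, hvar, one_mul]
  have hsum : ∑ i, w i * f (x i) - f x₀ - f' x₀ * ∑ i, w i * (x i - x₀) =
      ∑ i, w i * (f (x i) - f x₀ - f' x₀ * (x i - x₀)) := by
    simp only [mul_sub, Finset.sum_sub_distrib, Finset.mul_sum, ← Finset.sum_mul, hw₁]
    ring_nf
  calc |∑ i, w i * f (x i) - f x₀ - f' x₀ * ∑ i, w i * (x i - x₀)|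
      ≤ ∑ i, w i * |f (x i) - f x₀ - f' x₀ * (x i - x₀)| := by
        rw [hsum]
        refine (Finset.abs_sum_le_sum_abs _ _).trans_eq ?_
        simp only [abs_mul, abs_of_nonneg (hw _)]
    _ ≤ ∑ i, w i * (ε * |x i - x₀| + C * (x i - x₀) ^ 2) :=
        Finset.sum_le_sum fun i _ => mul_le_mul_of_nonneg_left (hR i) (hw i)
    _ = ε * ∑ i, w i * |x i - x₀| + C * ∑ i, w i * (x i - x₀) ^ 2 := by
        rw [Finset.mul_sum, Finset.mul_sum, ← Finset.sum_add_distrib]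
        exact Finset.sum_congr rfl fun i _ => by ring
    _ ≤ ε * a + C * a ^ 2 := by
        rw [hvar]
        gcongr

section IsSymmetric

variable {𝕜 E ι : Type*} [RCLike 𝕜] [NormedAddCommGroup E] [InnerProductSpace 𝕜 E] [Fintype ι]
  {T : E →ₗ[𝕜] E} {b : OrthonormalBasis ι 𝕜 E} {e : ι → ℝ}

theorem LinearMap.IsSymmetric.inner_apply_eq_mul_inner (hT : T.IsSymmetric)
    (hb : ∀ i, T (b i) = (e i : 𝕜) • b i) (i : ι) (v : E) :
    ⟪b i, T v⟫_𝕜 = e i * ⟪b i, v⟫_𝕜 := by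
  rw [← hT, hb, inner_smul_left, conj_ofReal]

theorem LinearMap.IsSymmetric.sum_sq_norm_inner_mul_eq_re_inner (hT : T.IsSymmetric)
    (hb : ∀ i, T (b i) = (e i : 𝕜) • b i) (v : E) :
    ∑ i, ‖⟪b i, v⟫_𝕜‖ ^ 2 * e i = re ⟪v, T v⟫_𝕜 := by
  rw [← b.sum_inner_mul_inner, map_sum]
  refine Finset.sum_congr rfl fun i _ => ?_
  rw [hT.inner_apply_eq_mul_inner hb, ← inner_conj_symm v, mul_left_comm, RCLike.conj_mul,
    ← ofReal_pow, ← ofReal_mul, ofReal_re, mul_comm]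

theorem LinearMap.IsSymmetric.sum_sq_norm_inner_mul_sq_sub (hT : T.IsSymmetric)
    (hb : ∀ i, T (b i) = (e i : 𝕜) • b i) (v : E) (c : ℝ) :
    ∑ i, ‖⟪b i, v⟫_𝕜‖ ^ 2 * (e i - c) ^ 2 = ‖T v - (c : 𝕜) • v‖ ^ 2 := by
  rw [← b.sum_sq_norm_inner_right]
  refine Finset.sum_congr rfl fun i _ => ?_
  rw [inner_sub_right, inner_smul_right, hT.inner_apply_eq_mul_inner hb, ← sub_mul, ← ofReal_sub,
    norm_mul, norm_ofReal, mul_pow, sq_abs, mul_comm]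

theorem LinearMap.IsSymmetric.abs_sum_sq_norm_inner_mul_sub_le (hT : T.IsSymmetric)
    (hb : ∀ i, T (b i) = (e i : 𝕜) • b i) {v : E} (hv : ‖v‖ = 1) {f f' : ℝ → ℝ} {c ε C : ℝ}
    (hε : 0 ≤ ε)
    (hR : ∀ i, |f (e i) - f c - f' c * (e i - c)| ≤ ε * |e i - c| + C * (e i - c) ^ 2) :
    |∑ i, ‖⟪b i, v⟫_𝕜‖ ^ 2 * f (e i) - f c - f' c * re ⟪v, T v - (c : 𝕜) • v⟫_𝕜| ≤
      ε * ‖T v - (c : 𝕜) • v‖ + C * ‖T v - (c : 𝕜) • v‖ ^ 2 := by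
  have hw₁ : ∑ i, ‖⟪b i, v⟫_𝕜‖ ^ 2 = 1 := by rw [b.sum_sq_norm_inner_right, hv, one_pow]
  have hmean : ∑ i, ‖⟪b i, v⟫_𝕜‖ ^ 2 * (e i - c) = re ⟪v, T v - (c : 𝕜) • v⟫_𝕜 := by
    simp only [mul_sub, Finset.sum_sub_distrib, ← Finset.sum_mul, hw₁,
      hT.sum_sq_norm_inner_mul_eq_re_inner hb, inner_sub_right, inner_smul_right,
      inner_self_eq_norm_sq_to_K, hv, map_sub]
    simp
  rw [← hmean]
  exact abs_sum_mul_sub_sub_deriv_le (fun _ => sq_nonneg _) hw₁ hε hR (norm_nonneg _)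
    (hT.sum_sq_norm_inner_mul_sq_sub hb v c)

end IsSymmetric

theorem Matrix.IsHermitian.re_trace_matFun {n : Type*} [Fintype n] [DecidableEq n]
    {A : Matrix n n ℂ} (hA : A.IsHermitian) (f : ℝ → ℝ) :
    (matFun f A).trace.re = ∑ i, f (hA.eigenvalues i) := by
  have hU : star (hA.eigenvectorUnitary : Matrix n n ℂ) * hA.eigenvectorUnitary = 1 :=
    hA.eigenvectorUnitary.2.1
  rw [matFun, dif_pos hA, Matrix.trace_mul_cycle, hU, Matrix.one_mul, Matrix.trace_diagonal]
  simp

namespace Matrix.IsHermitian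

variable {𝕜 n : Type*} [RCLike 𝕜] [Fintype n] [DecidableEq n] {A B V : Matrix n n 𝕜}

theorem toEuclideanLin_eigenvectorBasis (hA : A.IsHermitian) (i : n) :
    toEuclideanLin A (hA.eigenvectorBasis i) = (hA.eigenvalues i : 𝕜) • hA.eigenvectorBasis i := by
  rw [toLpLin_apply, hA.mulVec_eigenvectorBasis, WithLp.toLp_smul, WithLp.toLp_ofLp,
    real_smul_eq_coe_smul (K := 𝕜)]

theorem abs_eigenvalues_le (hA : A.IsHermitian) (i : n) :
    |hA.eigenvalues i| ≤ ‖toEuclideanCLM (𝕜 := 𝕜) A‖ := by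
  have hψ : ‖hA.eigenvectorBasis i‖ = 1 := hA.eigenvectorBasis.orthonormal.1 i
  calc |hA.eigenvalues i| = ‖toEuclideanLin A (hA.eigenvectorBasis i)‖ := by
        rw [hA.toEuclideanLin_eigenvectorBasis, norm_smul, hψ, mul_one, norm_ofReal]
    _ ≤ ‖toEuclideanCLM (𝕜 := 𝕜) A‖ * ‖hA.eigenvectorBasis i‖ :=
        (toEuclideanCLM (𝕜 := 𝕜) A).le_opNorm _
    _ = ‖toEuclideanCLM (𝕜 := 𝕜) A‖ := by rw [hψ, mul_one]

theorem abs_sum_eigenvalues_sub_sub_le (hA : A.IsHermitian) (hB : B.IsHermitian)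
    {f f' : ℝ → ℝ} {ε C : ℝ} (hε : 0 ≤ ε)
    (hR : ∀ i j, |f (hB.eigenvalues i) - f (hA.eigenvalues j) -
      f' (hA.eigenvalues j) * (hB.eigenvalues i - hA.eigenvalues j)| ≤
        ε * |hB.eigenvalues i - hA.eigenvalues j| +
          C * (hB.eigenvalues i - hA.eigenvalues j) ^ 2) :
    |∑ i, f (hB.eigenvalues i) - ∑ j, f (hA.eigenvalues j) -
        ∑ j, f' (hA.eigenvalues j) *
          re ⟪hA.eigenvectorBasis j, toEuclideanLin (B - A) (hA.eigenvectorBasis j)⟫_𝕜| ≤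
      ∑ j, (ε * ‖toEuclideanLin (B - A) (hA.eigenvectorBasis j)‖ +
        C * ‖toEuclideanLin (B - A) (hA.eigenvectorBasis j)‖ ^ 2) := by
  set ψ := hA.eigenvectorBasis
  set φ := hB.eigenvectorBasis
  have hresid : ∀ j, toEuclideanLin B (ψ j) - (hA.eigenvalues j : 𝕜) • ψ j =
      toEuclideanLin (B - A) (ψ j) := fun j => by
    rw [map_sub, LinearMap.sub_apply, hA.toEuclideanLin_eigenvectorBasis]
  have hrow :
      ∑ i, f (hB.eigenvalues i) = ∑ j, ∑ i, ‖⟪φ i, ψ j⟫_𝕜‖ ^ 2 * f (hB.eigenvalues i) := by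
    rw [Finset.sum_comm]
    refine Finset.sum_congr rfl fun i _ => ?_
    rw [← Finset.sum_mul, ψ.sum_sq_norm_inner_left, φ.orthonormal.1 i, one_pow, one_mul]
  rw [hrow, ← Finset.sum_sub_distrib, ← Finset.sum_sub_distrib]
  refine (Finset.abs_sum_le_sum_abs _ _).trans (Finset.sum_le_sum fun j _ => ?_)
  rw [← hresid]
  exact (isSymmetric_toEuclideanLin_iff.mpr hB).abs_sum_sq_norm_inner_mul_sub_le
    hB.toEuclideanLin_eigenvectorBasis (ψ.orthonormal.1 j) hε (fun i => hR i j)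

theorem abs_sum_eigenvalues_add_smul_sub_sub_le (hA : A.IsHermitian) {t : ℝ}
    (hAt : (A + (t : 𝕜) • V).IsHermitian) {f f' : ℝ → ℝ} {ε C : ℝ} (hε : 0 ≤ ε)
    (hR : ∀ i j, |f (hAt.eigenvalues i) - f (hA.eigenvalues j) -
      f' (hA.eigenvalues j) * (hAt.eigenvalues i - hA.eigenvalues j)| ≤
        ε * |hAt.eigenvalues i - hA.eigenvalues j| +
          C * (hAt.eigenvalues i - hA.eigenvalues j) ^ 2) :
    |∑ i, f (hAt.eigenvalues i) - ∑ j, f (hA.eigenvalues j) -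
        t * ∑ j, f' (hA.eigenvalues j) *
          re ⟪toEuclideanLin V (hA.eigenvectorBasis j), hA.eigenvectorBasis j⟫_𝕜| ≤
      ε * |t| * ∑ j, ‖toEuclideanLin V (hA.eigenvectorBasis j)‖ +
        C * t ^ 2 * ∑ j, ‖toEuclideanLin V (hA.eigenvectorBasis j)‖ ^ 2 := by
  have hW : ∀ x, toEuclideanLin (A + (t : 𝕜) • V - A) x = (t : 𝕜) • toEuclideanLin V x :=
    fun x => by rw [add_sub_cancel_left, map_smul, LinearMap.smul_apply]
  have h := hA.abs_sum_eigenvalues_sub_sub_le hAt hε hR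
  simp only [hW, inner_smul_right, re_ofReal_mul, norm_smul, norm_ofReal, mul_pow, sq_abs,
    inner_re_symm (𝕜 := 𝕜) (hA.eigenvectorBasis _)] at h
  calc _ = |∑ i, f (hAt.eigenvalues i) - ∑ j, f (hA.eigenvalues j) -
        ∑ j, f' (hA.eigenvalues j) *
          (t * re ⟪toEuclideanLin V (hA.eigenvectorBasis j), hA.eigenvectorBasis j⟫_𝕜)| := by
        simp only [Finset.mul_sum, mul_left_comm t]
    _ ≤ _ := h
    _ = _ := by simp only [Finset.sum_add_distrib, Finset.mul_sum, mul_assoc]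

end Matrix.IsHermitian

/-- First-order trace formula: for Hermitian matrices `H₀` (with eigenvalues `μᵢ` and
orthonormal eigenbasis `ψᵢ`) and `V`, and `f` continuously differentiable,
`(d/dt)|_{t=0} Tr f(H₀ + tV) = ∑ᵢ f'(μᵢ)·⟨Vψᵢ, ψᵢ⟩`. -/
theorem trace_deriv_first_order {n : Type*} [Fintype n] [DecidableEq n]
    (H₀ V : Matrix n n ℂ) (hH₀ : H₀.IsHermitian) (hV : V.IsHermitian)
    (f : ℝ → ℝ) (hf : ContDiff ℝ 1 f) :
    HasDerivAt (fun t : ℝ => (Matrix.trace (matFun f (H₀ + (t : ℂ) • V))).re)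
      (∑ i, deriv f (hH₀.eigenvalues i) *
        (inner ℂ (Matrix.toEuclideanLin V (hH₀.eigenvectorBasis i))
          (hH₀.eigenvectorBasis i) : ℂ).re) 0 := by
  have hH : ∀ t : ℝ, (H₀ + (t : ℂ) • V).IsHermitian := fun t =>
    hH₀.add (hV.smul (Complex.conj_ofReal t))
  set K := ‖Matrix.toEuclideanCLM (𝕜 := ℂ) H₀‖ + ‖Matrix.toEuclideanCLM (𝕜 := ℂ) V‖ with hK
  have hspec₀ : ∀ j, hH₀.eigenvalues j ∈ Set.Icc (-K) K := fun j =>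
    abs_le.mp ((hH₀.abs_eigenvalues_le j).trans (le_add_of_nonneg_right (norm_nonneg _)))
  have hspec : ∀ t : ℝ, |t| ≤ 1 → ∀ i, (hH t).eigenvalues i ∈ Set.Icc (-K) K := by
    intro t ht i
    refine abs_le.mp (((hH t).abs_eigenvalues_le i).trans ?_)
    rw [map_add, map_smul]
    refine (norm_add_le _ _).trans ?_
    rw [norm_smul, Complex.norm_real, Real.norm_eq_abs, hK]
    gcongr
    exact mul_le_of_le_one_left (norm_nonneg _) ht
  set S₁ := ∑ j, ‖Matrix.toEuclideanLin V (hH₀.eigenvectorBasis j)‖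
  set S₂ := ∑ j, ‖Matrix.toEuclideanLin V (hH₀.eigenvectorBasis j)‖ ^ 2
  refine hasDerivAt_of_forall_abs_sub_sub_le fun ε hε => ?_
  have hε' : 0 < ε / (S₁ + 1) := by positivity
  obtain ⟨C, hC⟩ := hf.exists_abs_sub_sub_deriv_mul_le (-K) K hε'
  refine ⟨C * S₂, ?_⟩
  filter_upwards [Metric.closedBall_mem_nhds (0 : ℝ) one_pos] with t ht
  rw [Metric.mem_closedBall, Real.dist_eq, sub_zero] at ht
  have h := hH₀.abs_sum_eigenvalues_add_smul_sub_sub_le (hH t) hε'.le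
    fun i j => hC _ (hspec₀ j) _ (hspec t ht i)
  rw [(hH t).re_trace_matFun, Complex.ofReal_zero, zero_smul, add_zero, hH₀.re_trace_matFun,
    sub_zero]
  have hS₁ : ε / (S₁ + 1) * S₁ ≤ ε := by
    rw [div_mul_eq_mul_div, div_le_iff₀ (by positivity)]
    nlinarith
  calc _ ≤ ε / (S₁ + 1) * |t| * S₁ + C * t ^ 2 * S₂ := h
    _ ≤ ε * |t| + C * S₂ * t ^ 2 := by nlinarith [abs_nonneg t]
end

section
/- Let H₀ be a self-adjoint n×n matrix and V a self-adjoint n×n matrix, and let f : ℝ → ℝ be C³ with compact support in (a,b). Define ξ(λ) = (number of eigenvalues of H₀ in (a,λ]) − (number of eigenvalues of H₀+V in (a,λ]), counting multiplicities. Then Tr f(H₀+V) − Tr f(H₀) = ∫_a^b f'(λ) ξ(λ) dλ. -/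
/-!
Both traces are sums of `f` over eigenvalues, and `ξ` is a difference of two eigenvalue counting
functions, so it suffices to treat a single eigenvalue `μ`: its contribution to the counting
function on `[a, b]` is the indicator of `[μ, ∞)` when `a < μ`, and `l ↦ f (max l μ)` is a primitive
of `(Ici μ).indicator f'` in the sense of right derivatives. Hence the contribution to the integral
is `f (max b μ) - f μ = -f μ`, since `f` vanishes at `b`; when `μ ≤ a` both the contribution and
`f μ` vanish.
-/

open MeasureTheory Set

theorem trace_matFun {n : Type*} [Fintype n] [DecidableEq n] (f : ℝ → ℝ) {A : Matrix n n ℂ}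
    (hA : A.IsHermitian) :
    (matFun f A).trace = ∑ i, (f (hA.eigenvalues i) : ℂ) := by
  rw [matFun, dif_pos hA, Matrix.trace_mul_comm, ← Matrix.mul_assoc]
  simp [Matrix.trace_diagonal]

section

variable {f : ℝ → ℝ}

theorem intervalIntegrable_indicator_Ici_deriv (hf : ContDiff ℝ 1 f) (a b μ : ℝ) :
    IntervalIntegrable ((Ici μ).indicator (deriv f)) volume a b :=
  have h := (hf.continuous_deriv le_rfl).intervalIntegrable a b
  ⟨h.1.indicator measurableSet_Ici, h.2.indicator measurableSet_Ici⟩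

theorem integral_indicator_Ici_deriv (hf : ContDiff ℝ 1 f) (a b μ : ℝ) :
    ∫ l in a..b, (Ici μ).indicator (deriv f) l = f (max b μ) - f (max a μ) := by
  refine intervalIntegral.integral_eq_sub_of_hasDeriv_right (f := fun l => f (max l μ))
    ((hf.continuous.comp (continuous_id.max continuous_const)).continuousOn)
    (fun x _ => ?_) (intervalIntegrable_indicator_Ici_deriv hf a b μ)
  rcases lt_or_ge x μ with hxμ | hμx
  · rw [indicator_of_notMem (notMem_Ici.mpr hxμ)]
    refine ((hasDerivAt_const x (f μ)).congr_of_eventuallyEq ?_).hasDerivWithinAt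
    filter_upwards [Iio_mem_nhds hxμ] with l hl
    rw [max_eq_right hl.le]
  · rw [indicator_of_mem (mem_Ici.mpr hμx)]
    refine (hf.differentiable one_ne_zero x).hasDerivAt.hasDerivWithinAt.congr
      (fun l hl => ?_) (by rw [max_eq_left hμx])
    rw [max_eq_left (hμx.trans hl.le)]

theorem deriv_mul_ncard_Ioc {ι : Type*} [Fintype ι] (μ : ι → ℝ) (a l : ℝ) :
    deriv f l * ({i | μ i ∈ Ioc a l}.ncard : ℝ) =
      ∑ i with a < μ i, (Ici (μ i)).indicator (deriv f) l := by
  classical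
  rw [ncard_eq_toFinset_card', toFinset_ofPred, Finset.natCast_card_filter, Finset.mul_sum,
    Finset.sum_filter]
  refine Finset.sum_congr rfl fun i _ => ?_
  by_cases h : a < μ i <;> by_cases h' : μ i ≤ l <;> simp [h, h']

theorem intervalIntegrable_deriv_mul_ncard_Ioc {ι : Type*} [Fintype ι] (hf : ContDiff ℝ 1 f)
    (μ : ι → ℝ) (a b : ℝ) :
    IntervalIntegrable (fun l => deriv f l * ({i | μ i ∈ Ioc a l}.ncard : ℝ)) volume a b := by
  simp only [deriv_mul_ncard_Ioc]
  rw [← Finset.sum_fn]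
  exact IntervalIntegrable.sum _ fun i _ => intervalIntegrable_indicator_Ici_deriv hf a b (μ i)

theorem integral_deriv_mul_ncard_Ioc {ι : Type*} [Fintype ι] (hf : ContDiff ℝ 1 f)
    {a b : ℝ} (hsupp : tsupport f ⊆ Ioo a b) (μ : ι → ℝ) :
    ∫ l in a..b, deriv f l * ({i | μ i ∈ Ioc a l}.ncard : ℝ) = -∑ i, f (μ i) := by
  have hf_eq_zero : ∀ x ∉ Ioo a b, f x = 0 := fun x hx =>
    image_eq_zero_of_notMem_tsupport fun h => hx (hsupp h)
  simp only [deriv_mul_ncard_Ioc]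
  rw [intervalIntegral.integral_finsetSum fun i _ => intervalIntegrable_indicator_Ici_deriv hf a b _,
    ← Finset.sum_neg_distrib, ← Finset.sum_filter_of_ne (s := Finset.univ) (p := (a < μ ·))
      (f := fun i => -f (μ i)) fun i _ hi => ?_]
  · refine Finset.sum_congr rfl fun i hi => ?_
    rw [integral_indicator_Ici_deriv hf, max_eq_right (Finset.mem_filter.mp hi).2.le,
      hf_eq_zero _ fun h => (le_max_left b (μ i)).not_gt h.2, zero_sub]
  · by_contra hμ
    exact hi (by rw [hf_eq_zero _ fun h => hμ h.1, neg_zero])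

end

theorem trace_diff_eq_integral_spectralShift_matrix_general
    {n : Type*} [Fintype n] [DecidableEq n]
    (H₀ V : Matrix n n ℂ) (hH₀ : H₀.IsHermitian)
    (hS : (H₀ + V).IsHermitian)
    (a b : ℝ) (f : ℝ → ℝ) (hf : ContDiff ℝ 3 f)
    (hsupp : tsupport f ⊆ Set.Ioo a b) :
    (Matrix.trace (matFun f (H₀ + V))).re - (Matrix.trace (matFun f H₀)).re =
      ∫ l in a..b, deriv f l *
        (({i | hH₀.eigenvalues i ∈ Set.Ioc a l}.ncard : ℝ) -
          ({i | hS.eigenvalues i ∈ Set.Ioc a l}.ncard : ℝ)) := by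
  have hf₁ : ContDiff ℝ 1 f := hf.of_le (by norm_num)
  simp_rw [mul_sub]
  rw [intervalIntegral.integral_sub (intervalIntegrable_deriv_mul_ncard_Ioc hf₁ _ a b)
      (intervalIntegrable_deriv_mul_ncard_Ioc hf₁ _ a b),
    integral_deriv_mul_ncard_Ioc hf₁ hsupp, integral_deriv_mul_ncard_Ioc hf₁ hsupp,
    trace_matFun f hS, trace_matFun f hH₀]
  simp only [Complex.re_sum, Complex.ofReal_re]
  ring

/-- Finite-dimensional Krein trace formula: for Hermitian `n×n` matrices `H₀` and `V` and
`f : ℝ → ℝ` of class `C³` compactly supported in `(a,b)`, with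
`ξ(λ) = #{eigenvalues of H₀ in (a,λ]} − #{eigenvalues of H₀+V in (a,λ]}` (with multiplicity),
one has `Tr f(H₀+V) − Tr f(H₀) = ∫_a^b f'(λ) ξ(λ) dλ`. -/
theorem trace_diff_eq_integral_spectralShift_matrix
    {n : Type*} [Fintype n] [DecidableEq n]
    (H₀ V : Matrix n n ℂ) (hH₀ : H₀.IsHermitian) (hV : V.IsHermitian)
    (hS : (H₀ + V).IsHermitian)
    (a b : ℝ) (f : ℝ → ℝ) (hf : ContDiff ℝ 3 f)
    (hsupp : tsupport f ⊆ Set.Ioo a b) :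
    (Matrix.trace (matFun f (H₀ + V))).re - (Matrix.trace (matFun f H₀)).re =
      ∫ l in a..b, deriv f l *
        (({i | hH₀.eigenvalues i ∈ Set.Ioc a l}.ncard : ℝ) -
          ({i | hS.eigenvalues i ∈ Set.Ioc a l}.ncard : ℝ)) :=
  trace_diff_eq_integral_spectralShift_matrix_general H₀ V hH₀ hS a b f hf hsupp
end
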